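/- arXiv:2410.22696 — 2 statements merged into one kernel-verified Lean document; each statement's English description precedes it below -/
import Mathlib

section
/- Let ρ_{AB} = ⊕_a p_a ρ_{A B_a^L} ⊗ ω_{B_a^R} be a state in Koashi–Imoto form on H_A ⊗ (⊕_a H_{B_a^L} ⊗ H_{B_a^R}). Then the mutual information satisfies I(A : B)_ρ = I(A : B^L)_{ℰ(ρ)}, where ℰ is the compression channel ℰ(X) = ⊕_a tr_{B_a^R}(Π_a X Π_a) mapping B to B^L = ⊕_a H_{B_a^L}; i.e., tracing out the B_a^R factors does not change the mutual information with A. -/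
open scoped ComplexOrder

/-- Von Neumann entropy `S(M) = -Σ λᵢ log λᵢ` of a (Hermitian) matrix, via its eigenvalues
(junk value 0 if `M` is not Hermitian). -/
noncomputable def vNent {n : Type*} [Fintype n] [DecidableEq n] (M : Matrix n n ℂ) : ℝ :=
  if h : M.IsHermitian then -∑ i, h.eigenvalues i * Real.log (h.eigenvalues i) else 0

/-- Partial trace over the second tensor factor. -/
noncomputable def ptraceB {A B : Type*} [Fintype A] [Fintype B]
    (M : Matrix (A × B) (A × B) ℂ) : Matrix A A ℂ :=
  Matrix.of fun i j => ∑ b, M (i, b) (j, b)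

/-- Partial trace over the first tensor factor. -/
noncomputable def ptraceA {A B : Type*} [Fintype A] [Fintype B]
    (M : Matrix (A × B) (A × B) ℂ) : Matrix B B ℂ :=
  Matrix.of fun b c => ∑ i, M (i, b) (i, c)

/-- Mutual information `I(A:B) = S(ρ_A) + S(ρ_B) − S(ρ_{AB})`. -/
noncomputable def mutInfo {A B : Type*} [Fintype A] [Fintype B] [DecidableEq A] [DecidableEq B]
    (M : Matrix (A × B) (A × B) ℂ) : ℝ :=
  vNent (ptraceB M) + vNent (ptraceA M) - vNent M

/-!
Both `ρ` and `ℰ(ρ)` are block diagonal (up to reordering the tensor factors), with blocks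
`K_a ⊗ ω_a` and `K_a` respectively, where `K_a = p_a ρ_{A B_a^L}`; so are their marginals on `B`
and `B^L`, with `K_a` replaced by `tr_A K_a`, while their marginals on `A` agree. Entropy is
additive over blocks and `S(K ⊗ ω) = S(K) + tr K · S(ω)` when `tr ω = 1`, so passing from `ρ` to
`ℰ(ρ)` lowers both `S(ρ_B)` and `S(ρ_{AB})` by the same amount `Σ_a tr K_a · S(ω_a)`.
-/

open Matrix Polynomial Real Kronecker

section Spectral

variable {n : Type*} [Fintype n] [DecidableEq n]

lemma Matrix.IsHermitian.eq_eigenvectorUnitary_mul_diagonal_mul {M : Matrix n n ℂ}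
    (hM : M.IsHermitian) :
    M = (hM.eigenvectorUnitary : Matrix n n ℂ) * diagonal (fun i => (hM.eigenvalues i : ℂ)) *
      (hM.eigenvectorUnitary : Matrix n n ℂ)ᴴ := by
  conv_lhs => rw [hM.spectral_theorem, Unitary.conjStarAlgAut_apply]
  rfl

lemma Matrix.IsHermitian.eigenvectorUnitary_conjTranspose_mul {M : Matrix n n ℂ}
    (hM : M.IsHermitian) :
    (hM.eigenvectorUnitary : Matrix n n ℂ)ᴴ * hM.eigenvectorUnitary = 1 :=
  Unitary.coe_star_mul_self _

end Spectral

lemma Matrix.IsHermitian.kronecker {n m : Type*} {P : Matrix n n ℂ} {Q : Matrix m m ℂ}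
    (hP : P.IsHermitian) (hQ : Q.IsHermitian) : (P ⊗ₖ Q).IsHermitian := by
  rw [IsHermitian, conjTranspose_kronecker, hP.eq, hQ.eq]

lemma Matrix.IsHermitian.ptraceA {A B : Type*} [Fintype A] [Fintype B]
    {M : Matrix (A × B) (A × B) ℂ} (hM : M.IsHermitian) : (ptraceA M).IsHermitian := by
  ext b c
  simp only [conjTranspose_apply, _root_.ptraceA, of_apply, star_sum]
  exact Finset.sum_congr rfl fun i _ => by rw [← conjTranspose_apply, hM.eq]

lemma trace_ptraceA {A B : Type*} [Fintype A] [Fintype B] (M : Matrix (A × B) (A × B) ℂ) :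
    (ptraceA M).trace = M.trace := by
  simp only [trace, diag_apply, ptraceA, of_apply, Fintype.sum_prod_type]
  exact Finset.sum_comm

section Entropy

variable {n m : Type*} [Fintype n] [DecidableEq n] [Fintype m]

lemma vNent_eq_sum_negMulLog {M : Matrix n n ℂ} (hM : M.IsHermitian) :
    vNent M = ∑ i, negMulLog (hM.eigenvalues i) := by
  simp [vNent, hM, negMulLog]

lemma vNent_eq_of_charpoly_eq {M : Matrix n n ℂ} (hM : M.IsHermitian) (d : m → ℝ)
    (h : M.charpoly = ∏ i, (X - C (d i : ℂ))) :
    vNent M = ∑ i, negMulLog (d i) := by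
  have hroots := hM.roots_charpoly_eq_eigenvalues
  rw [h, roots_prod _ _ (by simp [Finset.prod_ne_zero_iff, X_sub_C_ne_zero])] at hroots
  simp only [roots_X_sub_C, Multiset.bind_singleton] at hroots
  rw [vNent_eq_sum_negMulLog hM, Finset.sum_eq_multiset_sum, Finset.sum_eq_multiset_sum]
  simpa [Multiset.map_map, Function.comp_def] using
    congrArg (fun s => (s.map (negMulLog ∘ RCLike.re)).sum) hroots.symm

lemma vNent_submatrix_equiv [DecidableEq m] {M : Matrix n n ℂ} (hM : M.IsHermitian)
    (e : m ≃ n) :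
    vNent (M.submatrix e e) = vNent M := by
  rw [vNent_eq_sum_negMulLog hM]
  exact vNent_eq_of_charpoly_eq (hM.submatrix e) _
    ((charpoly_reindex e.symm M).trans hM.charpoly_eq)

lemma vNent_eq_of_eq_conj_diagonal {M U : Matrix n n ℂ} (hM : M.IsHermitian) (hU : Uᴴ * U = 1)
    (d : n → ℝ) (h : M = U * diagonal (fun i => (d i : ℂ)) * Uᴴ) :
    vNent M = ∑ i, negMulLog (d i) := by
  refine vNent_eq_of_charpoly_eq hM d ?_
  rw [h, charpoly_mul_comm, ← Matrix.mul_assoc, hU, Matrix.one_mul, charpoly_diagonal]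

lemma vNent_blockDiagonal' {ι : Type*} [Fintype ι] [DecidableEq ι] {β : ι → Type*}
    [∀ a, Fintype (β a)] [∀ a, DecidableEq (β a)] {M : ∀ a, Matrix (β a) (β a) ℂ}
    (hM : ∀ a, (M a).IsHermitian) :
    vNent (blockDiagonal' M) = ∑ a, vNent (M a) := by
  let U := blockDiagonal' fun a => ((hM a).eigenvectorUnitary : Matrix (β a) (β a) ℂ)
  have hU : Uᴴ * U = 1 := by
    simp only [U, blockDiagonal'_conjTranspose, ← blockDiagonal'_mul,
      IsHermitian.eigenvectorUnitary_conjTranspose_mul]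
    exact blockDiagonal'_one
  rw [vNent_eq_of_eq_conj_diagonal (isHermitian_blockDiagonal'_iff.2 hM) hU
    (fun x => (hM x.1).eigenvalues x.2)]
  · simp only [vNent_eq_sum_negMulLog (hM _), ← Finset.univ_sigma_univ, Finset.sum_sigma]
  · conv_lhs => rw [funext fun a => (hM a).eq_eigenvectorUnitary_mul_diagonal_mul]
    simp only [U, blockDiagonal'_conjTranspose, blockDiagonal'_mul, blockDiagonal'_diagonal]

lemma vNent_kronecker [DecidableEq m] {P : Matrix n n ℂ} {Q : Matrix m m ℂ}
    (hP : P.IsHermitian) (hQ : Q.IsHermitian) :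
    vNent (P ⊗ₖ Q) = Q.trace.re * vNent P + P.trace.re * vNent Q := by
  let U := (hP.eigenvectorUnitary : Matrix n n ℂ) ⊗ₖ (hQ.eigenvectorUnitary : Matrix m m ℂ)
  have hU : Uᴴ * U = 1 := by
    rw [conjTranspose_kronecker, ← mul_kronecker_mul, hP.eigenvectorUnitary_conjTranspose_mul,
      hQ.eigenvectorUnitary_conjTranspose_mul, one_kronecker_one]
  rw [vNent_eq_of_eq_conj_diagonal (hP.kronecker hQ) hU
    (fun x => hP.eigenvalues x.1 * hQ.eigenvalues x.2)]
  · rw [vNent_eq_sum_negMulLog hP, vNent_eq_sum_negMulLog hQ, hP.trace_eq_sum_eigenvalues,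
      hQ.trace_eq_sum_eigenvalues, Fintype.sum_prod_type]
    simp only [negMulLog_mul, Finset.sum_add_distrib, Finset.sum_mul, Finset.mul_sum,
      Complex.re_sum]
    exact congrArg _ Finset.sum_comm
  · conv_lhs => rw [hP.eq_eigenvectorUnitary_mul_diagonal_mul,
      hQ.eq_eigenvectorUnitary_mul_diagonal_mul]
    simp only [U, conjTranspose_kronecker, mul_kronecker_mul, diagonal_kronecker_diagonal]
    push_cast
    rfl

lemma vNent_blockDiagonal'_kronecker {ι : Type*} [Fintype ι] [DecidableEq ι]
    {β γ : ι → Type*} [∀ a, Fintype (β a)] [∀ a, DecidableEq (β a)] [∀ a, Fintype (γ a)]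
    [∀ a, DecidableEq (γ a)] {K : ∀ a, Matrix (β a) (β a) ℂ} {ω : ∀ a, Matrix (γ a) (γ a) ℂ}
    (hK : ∀ a, (K a).IsHermitian) (hω : ∀ a, (ω a).IsHermitian) (htr : ∀ a, (ω a).trace = 1) :
    vNent (blockDiagonal' fun a => K a ⊗ₖ ω a) =
      ∑ a, (vNent (K a) + (K a).trace.re * vNent (ω a)) := by
  rw [vNent_blockDiagonal' fun a => (hK a).kronecker (hω a)]
  simp [vNent_kronecker (hK _) (hω _), htr]

end Entropy

def prodSigmaEquiv (A : Type*) {ι : Type*} (β : ι → Type*) : (A × Σ a, β a) ≃ Σ a, A × β a where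
  toFun x := ⟨x.2.1, (x.1, x.2.2)⟩
  invFun y := (y.2.1, ⟨y.1, y.2.2⟩)

def prodSigmaProdEquiv (A : Type*) {ι : Type*} (β γ : ι → Type*) :
    (A × Σ a, β a × γ a) ≃ Σ a, (A × β a) × γ a :=
  (prodSigmaEquiv A _).trans (Equiv.sigmaCongrRight fun _ => (Equiv.prodAssoc _ _ _).symm)

section KoashiImoto

variable {ι A : Type*} {BL BR : ι → Type*}

def IsKoashiImotoForm [DecidableEq ι] (p : ι → ℝ)
    (ρA : (a : ι) → Matrix (A × BL a) (A × BL a) ℂ) (ω : (a : ι) → Matrix (BR a) (BR a) ℂ)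
    (ρ : Matrix (A × Σ a, BL a × BR a) (A × Σ a, BL a × BR a) ℂ) : Prop :=
  ∀ (i j : A) (u v : Σ a, BL a × BR a),
    ρ (i, u) (j, v) = if h : u.1 = v.1 then
      (p u.1 : ℂ) * ρA u.1 (i, u.2.1) (j, cast (congrArg BL h.symm) v.2.1)
        * ω u.1 u.2.2 (cast (congrArg BR h.symm) v.2.2)
    else 0

def IsCompressionChannel [DecidableEq ι] [∀ a, Fintype (BR a)]
    (E : Matrix (A × Σ a, BL a × BR a) (A × Σ a, BL a × BR a) ℂ →
      Matrix (A × Σ a, BL a) (A × Σ a, BL a) ℂ) : Prop :=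
  ∀ X (i j : A) (s t : Σ a, BL a),
    E X (i, s) (j, t) = if h : s.1 = t.1 then
      ∑ r : BR s.1, X (i, ⟨s.1, (s.2, r)⟩) (j, ⟨t.1, (t.2, cast (congrArg BR h) r)⟩)
    else 0

lemma IsCompressionChannel.ptraceB_apply [Fintype ι] [DecidableEq ι] [Fintype A]
    [∀ a, Fintype (BL a)] [∀ a, Fintype (BR a)]
    {E : Matrix (A × Σ a, BL a × BR a) (A × Σ a, BL a × BR a) ℂ →
      Matrix (A × Σ a, BL a) (A × Σ a, BL a) ℂ} (hE : IsCompressionChannel E) (X) :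
    ptraceB (E X) = ptraceB X := by
  rw [IsCompressionChannel] at hE
  ext i j
  simp only [ptraceB, of_apply, hE, dif_pos, cast_eq, ← Finset.univ_sigma_univ,
    Finset.sum_sigma, Fintype.sum_prod_type]

variable [DecidableEq ι] {p : ι → ℝ} {ρA : (a : ι) → Matrix (A × BL a) (A × BL a) ℂ}
  {ω : (a : ι) → Matrix (BR a) (BR a) ℂ}
  {ρ : Matrix (A × Σ a, BL a × BR a) (A × Σ a, BL a × BR a) ℂ}

lemma IsKoashiImotoForm.eq_submatrix_blockDiagonal' (hρ : IsKoashiImotoForm p ρA ω ρ) :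
    ρ = (blockDiagonal' fun a => (p a • ρA a) ⊗ₖ ω a).submatrix (prodSigmaProdEquiv A BL BR)
      (prodSigmaProdEquiv A BL BR) := by
  rw [IsKoashiImotoForm] at hρ
  ext ⟨i, a, l, r⟩ ⟨j, b, l', r'⟩
  rcases eq_or_ne a b with rfl | hab
  · simp [hρ, prodSigmaProdEquiv, prodSigmaEquiv, blockDiagonal'_apply_eq, mul_assoc]
  · simp [hρ, prodSigmaProdEquiv, prodSigmaEquiv, blockDiagonal'_apply_ne _ _ _ hab, hab]

lemma IsKoashiImotoForm.ptraceA_eq [Fintype ι] [Fintype A] [∀ a, Fintype (BL a)]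
    [∀ a, Fintype (BR a)] (hρ : IsKoashiImotoForm p ρA ω ρ) :
    ptraceA ρ = blockDiagonal' fun a => ptraceA (p a • ρA a) ⊗ₖ ω a := by
  rw [IsKoashiImotoForm] at hρ
  ext ⟨a, l, r⟩ ⟨b, l', r'⟩
  rcases eq_or_ne a b with rfl | hab
  · simp [hρ, ptraceA, blockDiagonal'_apply_eq, Finset.sum_mul, mul_assoc]
  · simp [hρ, ptraceA, blockDiagonal'_apply_ne _ _ _ hab, hab]

variable [∀ a, Fintype (BR a)] {E : Matrix (A × Σ a, BL a × BR a) (A × Σ a, BL a × BR a) ℂ →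
      Matrix (A × Σ a, BL a) (A × Σ a, BL a) ℂ}

lemma IsCompressionChannel.apply_eq_submatrix_blockDiagonal' (hE : IsCompressionChannel E)
    (hρ : IsKoashiImotoForm p ρA ω ρ) (hω : ∀ a, (ω a).trace = 1) :
    E ρ = (blockDiagonal' fun a => p a • ρA a).submatrix (prodSigmaEquiv A BL)
      (prodSigmaEquiv A BL) := by
  rw [IsKoashiImotoForm] at hρ
  rw [IsCompressionChannel] at hE
  ext ⟨i, a, l⟩ ⟨j, b, l'⟩
  rcases eq_or_ne a b with rfl | hab
  · simp [hE, hρ, prodSigmaEquiv, ← Finset.mul_sum, show ∑ r, ω a r r = 1 from hω a]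
  · simp [hE, prodSigmaEquiv, blockDiagonal'_apply_ne _ _ _ hab, hab]

lemma IsCompressionChannel.ptraceA_apply_eq [Fintype ι] [Fintype A] [∀ a, Fintype (BL a)]
    (hE : IsCompressionChannel E) (hρ : IsKoashiImotoForm p ρA ω ρ)
    (hω : ∀ a, (ω a).trace = 1) :
    ptraceA (E ρ) = blockDiagonal' fun a => ptraceA (p a • ρA a) := by
  rw [hE.apply_eq_submatrix_blockDiagonal' hρ hω]
  ext ⟨a, l⟩ ⟨b, l'⟩
  rcases eq_or_ne a b with rfl | hab
  · simp [ptraceA, prodSigmaEquiv]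
  · simp [ptraceA, prodSigmaEquiv, blockDiagonal'_apply_ne _ _ _ hab]

end KoashiImoto

theorem stmt9_general
    (ι : Type*) [Fintype ι] [DecidableEq ι]
    (A : Type*) [Fintype A] [DecidableEq A]
    (BL BR : ι → Type*) [∀ a, Fintype (BL a)] [∀ a, Fintype (BR a)]
    [∀ a, DecidableEq (BL a)] [∀ a, DecidableEq (BR a)]
    (p : ι → ℝ)
    (ρA : (a : ι) → Matrix (A × BL a) (A × BL a) ℂ)
    (hρA : ∀ a, (ρA a).PosSemidef ∧ (ρA a).trace = 1)
    (ω : (a : ι) → Matrix (BR a) (BR a) ℂ)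
    (hω : ∀ a, (ω a).PosSemidef ∧ (ω a).trace = 1)
    (ρ : Matrix (A × Σ a, BL a × BR a) (A × Σ a, BL a × BR a) ℂ)
    (hρ : ∀ (i j : A) (u v : Σ a, BL a × BR a),
      ρ (i, u) (j, v) = if h : u.1 = v.1 then
        (p u.1 : ℂ) * ρA u.1 (i, u.2.1) (j, cast (congrArg BL h.symm) v.2.1)
          * ω u.1 u.2.2 (cast (congrArg BR h.symm) v.2.2)
      else 0)
    (E : Matrix (A × Σ a, BL a × BR a) (A × Σ a, BL a × BR a) ℂ →
      Matrix (A × Σ a, BL a) (A × Σ a, BL a) ℂ)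
    (hE : ∀ X (i j : A) (s t : Σ a, BL a),
      E X (i, s) (j, t) = if h : s.1 = t.1 then
        ∑ r : BR s.1, X (i, ⟨s.1, (s.2, r)⟩) (j, ⟨t.1, (t.2, cast (congrArg BR h) r)⟩)
      else 0) :
    mutInfo ρ = mutInfo (E ρ) := by
  have hρ : IsKoashiImotoForm p ρA ω ρ := hρ
  have hE : IsCompressionChannel E := hE
  have htr (a : ι) : (ω a).trace = 1 := (hω a).2
  have hωH (a : ι) : (ω a).IsHermitian := (hω a).1.1
  have hK (a : ι) : (p a • ρA a).IsHermitian := (hρA a).1.1.smul (.all _)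
  have hKB (a : ι) : (ptraceA (p a • ρA a)).IsHermitian := (hK a).ptraceA
  have hSρ : vNent ρ = ∑ a, (vNent (p a • ρA a) + (p a • ρA a).trace.re * vNent (ω a)) := by
    conv_lhs => rw [hρ.eq_submatrix_blockDiagonal']
    rw [vNent_submatrix_equiv (isHermitian_blockDiagonal'_iff.2 fun a =>
      (hK a).kronecker (hωH a)), vNent_blockDiagonal'_kronecker hK hωH htr]
  rw [mutInfo, mutInfo, hE.ptraceB_apply, hSρ, hρ.ptraceA_eq, hE.ptraceA_apply_eq hρ htr,
    hE.apply_eq_submatrix_blockDiagonal' hρ htr, vNent_submatrix_equiv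
      (isHermitian_blockDiagonal'_iff.2 hK), vNent_blockDiagonal' hK, vNent_blockDiagonal' hKB,
    vNent_blockDiagonal'_kronecker hKB hωH htr]
  simp only [trace_ptraceA, Finset.sum_add_distrib]
  ring

/-- For a state `ρ_{AB} = ⊕_a p_a ρ_{A B_a^L} ⊗ ω_{B_a^R}` in Koashi–Imoto form,
the compression channel `ℰ(X) = ⊕_a tr_{B_a^R}(Π_a X Π_a)` mapping `B` to `B^L = ⊕_a H_{B_a^L}`
preserves the mutual information with `A`: `I(A:B)_ρ = I(A:B^L)_{ℰ(ρ)}`. -/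
theorem stmt9
    (ι : Type*) [Fintype ι] [DecidableEq ι]
    (A : Type*) [Fintype A] [DecidableEq A]
    (BL BR : ι → Type*) [∀ a, Fintype (BL a)] [∀ a, Fintype (BR a)]
    [∀ a, DecidableEq (BL a)] [∀ a, DecidableEq (BR a)]
    (p : ι → ℝ) (hp : ∀ a, 0 ≤ p a) (hp1 : ∑ a, p a = 1)
    (ρA : (a : ι) → Matrix (A × BL a) (A × BL a) ℂ)
    (hρA : ∀ a, (ρA a).PosSemidef ∧ (ρA a).trace = 1)
    (ω : (a : ι) → Matrix (BR a) (BR a) ℂ)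
    (hω : ∀ a, (ω a).PosSemidef ∧ (ω a).trace = 1)
    (ρ : Matrix (A × Σ a, BL a × BR a) (A × Σ a, BL a × BR a) ℂ)
    (hρ : ∀ (i j : A) (u v : Σ a, BL a × BR a),
      ρ (i, u) (j, v) = if h : u.1 = v.1 then
        (p u.1 : ℂ) * ρA u.1 (i, u.2.1) (j, cast (congrArg BL h.symm) v.2.1)
          * ω u.1 u.2.2 (cast (congrArg BR h.symm) v.2.2)
      else 0)
    (E : Matrix (A × Σ a, BL a × BR a) (A × Σ a, BL a × BR a) ℂ →
      Matrix (A × Σ a, BL a) (A × Σ a, BL a) ℂ)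
    (hE : ∀ X (i j : A) (s t : Σ a, BL a),
      E X (i, s) (j, t) = if h : s.1 = t.1 then
        ∑ r : BR s.1, X (i, ⟨s.1, (s.2, r)⟩) (j, ⟨t.1, (t.2, cast (congrArg BR h) r)⟩)
      else 0) :
    mutInfo ρ = mutInfo (E ρ) :=
  stmt9_general ι A BL BR p ρA hρA ω hω ρ hρ E hE
end

section
/- Let σ be a density operator on ℂ^d ⊗ ℂ^d with operator Schmidt decomposition σ = Σ_{α=1}^{D} F^α ⊗ G^α. Define the MPDO tensor on physical space (ℂ^d)^{⊗4} by W^{αβ} := G^α ⊗ σ ⊗ F^β. Then the resulting MPDO on L sites (with periodic boundary), ρ^{(L)} = Σ_{α₁,…,α_L} W^{α₁α₂} ⊗ W^{α₂α₃} ⊗ ⋯ ⊗ W^{α_Lα₁}, equals a tensor product of 'dimer' states: ρ^{(L)} = ⊗_{j=1}^{L} σ_{4j-2,4j-1} · ⊗_{i=1}^{L} σ_{4i,4i+1} (indices mod 4L), i.e., a product of commuting two-body factors σ placed on alternating adjacent pairs, which in particular equals e^{-H_L} for the commuting Hamiltonian H_L = −Σ_j ln σ_{4j-2,4j-1} − Σ_i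 ln σ_{4i,4i+1} when σ > 0. -/
/-!
Each bond index `α_j` of the periodic chain occurs in exactly two factors: `G^{α_j}` on the first
site of block `j` and `F^{α_j}` on the last site of block `j - 1`. Hence the sum over all bond
configurations factorizes into one independent sum per bond, and each of these is the operator
Schmidt decomposition of `σ` on the pair of sites straddling that bond. For `σ > 0` the spectral
theorem gives `σ = exp h` with `h = U (diag log λ) U*` Hermitian.
-/

open Finset
open scoped ComplexOrder

theorem Equiv.Perm.sum_pi_prod_mul_comp_eq_prod_sum {R ι κ : Type*} [CommSemiring R]
    [Fintype ι] [DecidableEq ι] [Fintype κ] (s : Equiv.Perm ι) (g f : ι → κ → R) :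
    ∑ α : ι → κ, ∏ j, g j (α j) * f j (α (s j)) = ∏ j, ∑ a, f j a * g (s j) a := by
  have regroup (α : ι → κ) : ∏ j, g j (α j) * f j (α (s j)) =
      ∏ j, f (s.symm j) (α j) * g j (α j) := by
    rw [prod_mul_distrib, prod_mul_distrib, mul_comm,
      ← Equiv.prod_comp s fun j => f (s.symm j) (α j)]
    simp
  rw [sum_congr rfl fun α _ => regroup α, ← Fintype.prod_sum fun j a => f (s.symm j) a * g j a,
    ← Equiv.prod_comp s fun j => ∑ a, f (s.symm j) a * g j a]
  simp

theorem sum_prod_mpdo_eq_prod_dimers {R n ι : Type*} [CommSemiring R] [Fintype ι] {L : ℕ}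
    [NeZero L] (σ : Matrix (n × n) (n × n) R) (F G : ι → Matrix n n R)
    (hdec : ∀ s t : n × n, σ s t = ∑ α, F α s.1 t.1 * G α s.2 t.2) (x y : Fin L × Fin 4 → n) :
    ∑ α : Fin L → ι, ∏ j : Fin L,
        (G (α j) (x (j, 0)) (y (j, 0)) * σ (x (j, 1), x (j, 2)) (y (j, 1), y (j, 2)) *
          F (α (j + 1)) (x (j, 3)) (y (j, 3)))
      = (∏ j : Fin L, σ (x (j, 1), x (j, 2)) (y (j, 1), y (j, 2))) *
        ∏ j : Fin L, σ (x (j, 3), x (j + 1, 0)) (y (j, 3), y (j + 1, 0)) := by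
  have split_inner (α : Fin L → ι) :
      ∏ j : Fin L, (G (α j) (x (j, 0)) (y (j, 0)) * σ (x (j, 1), x (j, 2)) (y (j, 1), y (j, 2)) *
        F (α (j + 1)) (x (j, 3)) (y (j, 3)))
      = (∏ j : Fin L, σ (x (j, 1), x (j, 2)) (y (j, 1), y (j, 2))) *
        ∏ j : Fin L, G (α j) (x (j, 0)) (y (j, 0)) * F (α (j + 1)) (x (j, 3)) (y (j, 3)) := by
    rw [← prod_mul_distrib]
    exact prod_congr rfl fun j _ => by ring
  rw [sum_congr rfl fun α _ => split_inner α, ← mul_sum]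
  exact congrArg _ <| ((Equiv.addRight (1 : Fin L)).sum_pi_prod_mul_comp_eq_prod_sum
    (fun j a => G a (x (j, 0)) (y (j, 0))) (fun j a => F a (x (j, 3)) (y (j, 3)))).trans
    (prod_congr rfl fun j _ => (hdec (x (j, 3), x (j + 1, 0)) (y (j, 3), y (j + 1, 0))).symm)

theorem Matrix.PosDef.exists_isHermitian_exp_eq {𝕜 n : Type*} [RCLike 𝕜] [Fintype n]
    [DecidableEq n] {A : Matrix n n 𝕜} (hA : A.PosDef) :
    ∃ h : Matrix n n 𝕜, h.IsHermitian ∧ NormedSpace.exp h = A := by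
  set U := hA.isHermitian.eigenvectorUnitary
  set logEig : n → 𝕜 := fun i => (Real.log (hA.isHermitian.eigenvalues i) : 𝕜)
  have exp_logEig : NormedSpace.exp logEig = RCLike.ofReal ∘ hA.isHermitian.eigenvalues := by
    funext i
    rw [Pi.coe_exp, ← RCLike.algebraMap_eq_ofReal, ← NormedSpace.algebraMap_exp_comm,
      ← Real.exp_eq_exp_ℝ, Real.exp_log (hA.eigenvalues_pos i)]
    rfl
  refine ⟨(U : Matrix n n 𝕜) * Matrix.diagonal logEig * star (U : Matrix n n 𝕜), ?_, ?_⟩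
  · exact Matrix.isHermitian_mul_mul_conjTranspose _
      (Matrix.isHermitian_diagonal_of_self_adjoint _ (funext fun i => RCLike.conj_ofReal _))
  · have := Matrix.exp_units_conj (Unitary.toUnits U) (Matrix.diagonal logEig)
    simp only [Unitary.val_toUnits_apply, Unitary.val_inv_toUnits_apply,
      ← Unitary.star_eq_inv, Unitary.coe_star] at this
    rw [this, Matrix.exp_diagonal, exp_logEig]
    exact hA.isHermitian.spectral_theorem.symm

theorem stmt16_general (d D L : ℕ) [NeZero L]
    (σ : Matrix (Fin d × Fin d) (Fin d × Fin d) ℂ)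
    (F G : Fin D → Matrix (Fin d) (Fin d) ℂ)
    (hdec : ∀ s t : Fin d × Fin d, σ s t = ∑ α, F α s.1 t.1 * G α s.2 t.2) :
    (∀ x y : Fin L × Fin 4 → Fin d,
      (∑ α : Fin L → Fin D, ∏ j : Fin L,
        (G (α j) (x (j, 0)) (y (j, 0)) * σ (x (j, 1), x (j, 2)) (y (j, 1), y (j, 2)) *
          F (α (j + 1)) (x (j, 3)) (y (j, 3))))
      = (∏ j : Fin L, σ (x (j, 1), x (j, 2)) (y (j, 1), y (j, 2))) *
        (∏ j : Fin L, σ (x (j, 3), x (j + 1, 0)) (y (j, 3), y (j + 1, 0)))) ∧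
    (σ.PosDef → ∃ h : Matrix (Fin d × Fin d) (Fin d × Fin d) ℂ,
      h.IsHermitian ∧ σ = NormedSpace.exp (-h)) := by
  refine ⟨sum_prod_mpdo_eq_prod_dimers σ F G hdec, fun hσ => ?_⟩
  obtain ⟨h, hh, hexp⟩ := hσ.exists_isHermitian_exp_eq
  exact ⟨-h, hh.neg, by rw [neg_neg, hexp]⟩

/-- Let `σ` be a density operator on `ℂ^d ⊗ ℂ^d` with operator Schmidt
decomposition `σ = Σ_α F^α ⊗ G^α`, and define the MPDO tensor `W^{αβ} = G^α ⊗ σ ⊗ F^β` on the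
physical space `(ℂ^d)^{⊗4}` (sites of block `j` labeled `(j,0),(j,1),(j,2),(j,3)`). Then the
MPDO on `L` sites with periodic boundary,
`ρ^{(L)} = Σ_{α₁,…,α_L} W^{α₁α₂} ⊗ ⋯ ⊗ W^{α_Lα₁}` (written entrywise below), equals the product
of dimers `⊗_j σ_{(j,1),(j,2)} · ⊗_j σ_{(j,3),(j+1,0)}` (indices cyclic); moreover when
`σ > 0`, `σ = e^{-h}` for a Hermitian `h`, so `ρ^{(L)}` is the Gibbs state of a commuting
local Hamiltonian. -/
theorem stmt16 (d D L : ℕ) [NeZero L]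
    (σ : Matrix (Fin d × Fin d) (Fin d × Fin d) ℂ)
    (hσpsd : σ.PosSemidef) (hσtr : σ.trace = 1)
    (F G : Fin D → Matrix (Fin d) (Fin d) ℂ)
    (hdec : ∀ s t : Fin d × Fin d, σ s t = ∑ α, F α s.1 t.1 * G α s.2 t.2) :
    (∀ x y : Fin L × Fin 4 → Fin d,
      (∑ α : Fin L → Fin D, ∏ j : Fin L,
        (G (α j) (x (j, 0)) (y (j, 0)) * σ (x (j, 1), x (j, 2)) (y (j, 1), y (j, 2)) *
          F (α (j + 1)) (x (j, 3)) (y (j, 3))))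
      = (∏ j : Fin L, σ (x (j, 1), x (j, 2)) (y (j, 1), y (j, 2))) *
        (∏ j : Fin L, σ (x (j, 3), x (j + 1, 0)) (y (j, 3), y (j + 1, 0)))) ∧
    (σ.PosDef → ∃ h : Matrix (Fin d × Fin d) (Fin d × Fin d) ℂ,
      h.IsHermitian ∧ σ = NormedSpace.exp (-h)) :=
  stmt16_general d D L σ F G hdec
end
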